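/- arXiv:0805.2037 — 4 statements merged into one kernel-verified Lean document; each statement's English description precedes it below -/
import Mathlib

section
/- For any two density matrices ρ₁, ρ₂ of size N (positive semidefinite, trace one), tr(ρ₁ρ₂) + √((1 - tr ρ₁²)(1 - tr ρ₂²)) ≤ 1, i.e. the super-fidelity is at most 1. -/
/-!
Write `xᵢ = tr ρᵢ²`. Since `ρ₁ - ρ₂` is Hermitian, `tr (ρ₁ - ρ₂)² ≥ 0`, i.e.
`2 tr(ρ₁ρ₂) ≤ x₁ + x₂`. The eigenvalues of a density matrix are nonnegative and sum to one,
so `xᵢ ≤ 1`, and AM–GM gives `√((1 - x₁)(1 - x₂)) ≤ (2 - x₁ - x₂) / 2`. Adding the two bounds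
gives `G(ρ₁, ρ₂) ≤ 1`.
-/

open Matrix ComplexOrder

lemma Real.sqrt_mul_le_half_add {x y : ℝ} (hx : 0 ≤ x) (hy : 0 ≤ y) :
    √(x * y) ≤ (x + y) / 2 :=
  Real.sqrt_le_iff.mpr ⟨by positivity, by nlinarith [sq_nonneg (x - y)]⟩

namespace Matrix

variable {n 𝕜 : Type*} [Fintype n] [RCLike 𝕜] {A B : Matrix n n 𝕜}

lemma IsHermitian.trace_mul_self [DecidableEq n] (hA : A.IsHermitian) :
    (A * A).trace = ∑ i, ((hA.eigenvalues i ^ 2 : ℝ) : 𝕜) := by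
  conv_lhs => rw [hA.spectral_theorem, ← map_mul, Unitary.conjStarAlgAut_apply, trace_mul_cycle,
    Unitary.coe_star_mul_self, one_mul, diagonal_mul_diagonal, trace_diagonal]
  simp [sq]

lemma PosSemidef.re_trace_mul_self_le_sq (hA : A.PosSemidef) :
    RCLike.re (A * A).trace ≤ (RCLike.re A.trace) ^ 2 := by
  classical
  rw [hA.1.trace_mul_self, hA.1.trace_eq_sum_eigenvalues]
  simp only [map_sum, RCLike.ofReal_re]
  exact Finset.sum_sq_le_sq_sum_of_nonneg fun i _ => hA.eigenvalues_nonneg i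

lemma IsHermitian.two_mul_re_trace_mul_le (hA : A.IsHermitian) (hB : B.IsHermitian) :
    2 * RCLike.re (A * B).trace ≤ RCLike.re (A * A).trace + RCLike.re (B * B).trace := by
  have hsq : 0 ≤ RCLike.re ((A - B) * (A - B)).trace := by
    have := (posSemidef_conjTranspose_mul_self (A - B)).trace_nonneg
    rw [(hA.sub hB).eq] at this
    exact (RCLike.nonneg_iff.mp this).1
  rw [sub_mul, mul_sub, mul_sub, trace_sub, trace_sub, trace_sub, trace_mul_comm B A] at hsq
  simp only [map_sub] at hsq
  linarith

end Matrix

theorem superFidelity_le_one {N : ℕ} (ρ₁ ρ₂ : Matrix (Fin N) (Fin N) ℂ)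
    (h1 : ρ₁.PosSemidef) (h2 : ρ₂.PosSemidef)
    (t1 : ρ₁.trace = 1) (t2 : ρ₂.trace = 1) :
    ((ρ₁ * ρ₂).trace).re +
      Real.sqrt ((1 - ((ρ₁ * ρ₁).trace).re) * (1 - ((ρ₂ * ρ₂).trace).re)) ≤ 1 := by
  have hx₁ : ((ρ₁ * ρ₁).trace).re ≤ 1 := by simpa [t1] using h1.re_trace_mul_self_le_sq
  have hx₂ : ((ρ₂ * ρ₂).trace).re ≤ 1 := by simpa [t2] using h2.re_trace_mul_self_le_sq
  have hcross := h1.1.two_mul_re_trace_mul_le h2.1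
  have hamgm := Real.sqrt_mul_le_half_add (sub_nonneg.2 hx₁) (sub_nonneg.2 hx₂)
  simp only [RCLike.re_to_complex] at hcross
  linarith
end

section
/- Super-fidelity is concave in its second argument: for density matrices A, B, C and α ∈ [0,1], G(A, αB + (1-α)C) ≥ α G(A,B) + (1-α) G(A,C), where G(X,Y) = tr(XY) + √((1-tr X²)(1-tr Y²)). -/
open Matrix ComplexOrder

/-- Super-fidelity `G(X,Y) = tr(XY) + √((1-tr X²)(1-tr Y²))`. -/
noncomputable def supFid {n : Type*} [Fintype n] (X Y : Matrix n n ℂ) : ℝ :=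
  ((X * Y).trace).re +
    Real.sqrt ((1 - ((X * X).trace).re) * (1 - ((Y * Y).trace).re))

/-! On density matrices `G(A, Y) = tr(AY) + √(1 - tr A²) · √(1 - tr Y²)`, a linear function of `Y`
plus a nonnegative multiple of `√(1 - tr Y²)`, so it suffices that the latter is concave.
With `t = tr B²`, `s = tr C²`, `r = tr BC` and `Y = aB + bC`, `a + b = 1`, one has
`1 - tr Y² = a²(1 - t) + 2ab(1 - r) + b²(1 - s)`, and `(a√(1 - t) + b√(1 - s))²` is at most this
because `√((1 - t)(1 - s)) ≤ 1 - (t + s)/2 ≤ 1 - r`, the last step being `tr (B - C)² ≥ 0`.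
That `tr Y² ≤ (tr Y)² = 1` is read off the eigenvalues. -/

theorem Real.mul_sqrt_one_sub_add_mul_sqrt_one_sub_le {t s r a b : ℝ} (ht : t ≤ 1) (hs : s ≤ 1)
    (hr : 2 * r ≤ t + s) (ha : 0 ≤ a) (hb : 0 ≤ b) (hab : a + b = 1) :
    a * √(1 - t) + b * √(1 - s) ≤ √(1 - (a ^ 2 * t + 2 * a * b * r + b ^ 2 * s)) := by
  have hu := Real.sq_sqrt (sub_nonneg.2 ht)
  have hv := Real.sq_sqrt (sub_nonneg.2 hs)
  have huv : √(1 - t) * √(1 - s) ≤ 1 - r := by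
    nlinarith [sq_nonneg (√(1 - t) - √(1 - s))]
  apply Real.le_sqrt_of_sq_le
  have hb' : b = 1 - a := by linarith
  subst hb'
  nlinarith [mul_le_mul_of_nonneg_left huv (mul_nonneg ha hb)]

namespace Matrix

def densityMatrices (n : Type*) [Fintype n] : Set (Matrix n n ℂ) :=
  {X | X.PosSemidef ∧ X.trace = 1}

variable {n : Type*} [Fintype n]

theorem convex_densityMatrices : Convex ℝ (densityMatrices n) := by
  rintro X ⟨hX, tX⟩ Y ⟨hY, tY⟩ a b ha hb hab
  exact ⟨(hX.smul ha).add (hY.smul hb), by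
    simp only [trace_add, trace_smul, tX, tY, Complex.real_smul, mul_one]; exact_mod_cast hab⟩

theorem IsHermitian.re_trace_mul_self_nonneg {X : Matrix n n ℂ} (hX : X.IsHermitian) :
    0 ≤ (X * X).trace.re := by
  have h := (posSemidef_conjTranspose_mul_self X).trace_nonneg
  rw [hX.eq] at h
  exact (Complex.le_def.1 h).1

theorem IsHermitian.two_mul_re_trace_mul_le_s7 {B C : Matrix n n ℂ} (hB : B.IsHermitian)
    (hC : C.IsHermitian) : 2 * (B * C).trace.re ≤ (B * B).trace.re + (C * C).trace.re := by
  have h := (hB.sub hC).re_trace_mul_self_nonneg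
  rw [sub_mul, mul_sub, mul_sub, trace_sub, trace_sub, trace_sub, trace_mul_comm C B] at h
  simp only [Complex.sub_re] at h
  linarith

theorem PosSemidef.re_trace_mul_self_le_sq_s7 {X : Matrix n n ℂ} (hX : X.PosSemidef) :
    (X * X).trace.re ≤ X.trace.re ^ 2 := by
  classical
  have hev := hX.eigenvalues_nonneg
  conv_lhs => rw [hX.1.spectral_theorem, ← map_mul, Unitary.conjStarAlgAut_apply, trace_mul_cycle,
    Unitary.coe_star_mul_self, one_mul, diagonal_mul_diagonal, trace_diagonal]
  rw [hX.1.trace_eq_sum_eigenvalues]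
  simp only [Function.comp_apply]
  norm_cast
  simp only [← sq]
  exact Finset.sum_sq_le_sq_sum_of_nonneg fun i _ => hev i

theorem re_trace_mul_self_le_one {X : Matrix n n ℂ} (hX : X ∈ densityMatrices n) :
    (X * X).trace.re ≤ 1 := by
  simpa [hX.2] using hX.1.re_trace_mul_self_le_sq_s7

theorem re_trace_mul_self_smul_add_smul (B C : Matrix n n ℂ) (a b : ℝ) :
    ((a • B + b • C) * (a • B + b • C)).trace.re =
      a ^ 2 * (B * B).trace.re + 2 * a * b * (B * C).trace.re + b ^ 2 * (C * C).trace.re := by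
  simp only [add_mul, mul_add, smul_mul_smul_comm, trace_add, trace_smul, trace_mul_comm C B,
    Complex.add_re, Complex.smul_re, smul_eq_mul]
  ring

theorem concaveOn_sqrt_one_sub_re_trace_mul_self :
    ConcaveOn ℝ (densityMatrices n) fun Y => √(1 - (Y * Y).trace.re) := by
  refine ⟨convex_densityMatrices, fun B hB C hC a b ha hb hab => ?_⟩
  simp only [smul_eq_mul, re_trace_mul_self_smul_add_smul]
  exact Real.mul_sqrt_one_sub_add_mul_sqrt_one_sub_le (re_trace_mul_self_le_one hB)
    (re_trace_mul_self_le_one hC) (hB.1.1.two_mul_re_trace_mul_le_s7 hC.1.1) ha hb hab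

theorem supFid_eq_of_mem_densityMatrices (X : Matrix n n ℂ) {Y : Matrix n n ℂ}
    (hY : Y ∈ densityMatrices n) :
    supFid X Y = (X * Y).trace.re + √(1 - (X * X).trace.re) * √(1 - (Y * Y).trace.re) := by
  rw [supFid, Real.sqrt_mul' _ (sub_nonneg.2 (re_trace_mul_self_le_one hY))]

theorem concaveOn_supFid (X : Matrix n n ℂ) : ConcaveOn ℝ (densityMatrices n) (supFid X) := by
  have hlin : ConcaveOn ℝ (densityMatrices n) fun Y => (X * Y).trace.re :=
    (Complex.reLm.comp ((traceLinearMap n ℝ ℂ).comp (LinearMap.mulLeft ℝ X))).concaveOn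
      convex_densityMatrices
  exact (hlin.add (concaveOn_sqrt_one_sub_re_trace_mul_self.smul (Real.sqrt_nonneg _))).congr
    fun Y hY => (supFid_eq_of_mem_densityMatrices X hY).symm

end Matrix

theorem superFidelity_concave_general {N : ℕ} (A B C : Matrix (Fin N) (Fin N) ℂ)
    (hB : B.PosSemidef) (hC : C.PosSemidef)
    (tB : B.trace = 1) (tC : C.trace = 1)
    (α : ℝ) (hα0 : 0 ≤ α) (hα1 : α ≤ 1) :
    supFid A ((α : ℂ) • B + ((1 - α : ℝ) : ℂ) • C) ≥
      α * supFid A B + (1 - α) * supFid A C := by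
  simpa only [Complex.coe_smul, smul_eq_mul] using
    (Matrix.concaveOn_supFid A).2 ⟨hB, tB⟩ ⟨hC, tC⟩ hα0 (sub_nonneg.2 hα1) (add_sub_cancel α 1)

theorem superFidelity_concave {N : ℕ} (A B C : Matrix (Fin N) (Fin N) ℂ)
    (hA : A.PosSemidef) (hB : B.PosSemidef) (hC : C.PosSemidef)
    (tA : A.trace = 1) (tB : B.trace = 1) (tC : C.trace = 1)
    (α : ℝ) (hα0 : 0 ≤ α) (hα1 : α ≤ 1) :
    supFid A ((α : ℂ) • B + ((1 - α : ℝ) : ℂ) • C) ≥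
      α * supFid A B + (1 - α) * supFid A C :=
  superFidelity_concave_general A B C hB hC tB tC α hα0 hα1
end

section
/- For real numbers α, β, γ, δ ∈ [0,1], √((1-αβ)(1-γδ)) ≥ √(αγ)·√((1-β)(1-δ)) + √(βδ)·√((1-α)(1-γ)) + √((1-α)(1-γ)(1-β)(1-δ)). -/
/-!
Since `1 - α β = α (1 - β) + β (1 - α) + (1 - α)(1 - β)` is a sum of three nonnegative terms, and
likewise for `1 - γ δ`, the inequality is Cauchy–Schwarz for the vectors of their square roots
`(√(α(1-β)), √(β(1-α)), √((1-α)(1-β)))` and `(√(γ(1-δ)), √(δ(1-γ)), √((1-γ)(1-δ)))`.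
-/

open Real

lemma Real.sqrt_mul_sqrt_add_three_le {a b c d e f : ℝ} (ha : 0 ≤ a) (hb : 0 ≤ b) (hc : 0 ≤ c)
    (hd : 0 ≤ d) (he : 0 ≤ e) (hf : 0 ≤ f) :
    √a * √d + √b * √e + √c * √f ≤ √((a + b + c) * (d + e + f)) := by
  have hsum : 0 ≤ a + b + c := by positivity
  have hcs := sum_sqrt_mul_sqrt_le Finset.univ (f := ![a, b, c]) (g := ![d, e, f])
    (by simp [Fin.forall_fin_succ, ha, hb, hc]) (by simp [Fin.forall_fin_succ, hd, he, hf])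
  rw [sqrt_mul hsum]
  simpa [Fin.sum_univ_succ, add_assoc] using hcs

lemma Real.sqrt_mul_mul_sqrt_mul {a b c d : ℝ} (ha : 0 ≤ a) (hb : 0 ≤ b) (hc : 0 ≤ c) :
    √(a * b) * √(c * d) = √(a * c) * √(b * d) := by
  rw [sqrt_mul ha, sqrt_mul hb, sqrt_mul hc, sqrt_mul ha]
  ring

lemma one_sub_mul_eq_add_add (x y : ℝ) :
    1 - x * y = x * (1 - y) + y * (1 - x) + (1 - x) * (1 - y) := by
  ring

theorem scalar_superMultiplicativity_ineq (α β γ δ : ℝ)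
    (hα0 : 0 ≤ α) (hα1 : α ≤ 1) (hβ0 : 0 ≤ β) (hβ1 : β ≤ 1)
    (hγ0 : 0 ≤ γ) (hγ1 : γ ≤ 1) (hδ0 : 0 ≤ δ) (hδ1 : δ ≤ 1) :
    Real.sqrt ((1 - α * β) * (1 - γ * δ)) ≥
      Real.sqrt (α * γ) * Real.sqrt ((1 - β) * (1 - δ)) +
      Real.sqrt (β * δ) * Real.sqrt ((1 - α) * (1 - γ)) +
      Real.sqrt ((1 - α) * (1 - γ) * (1 - β) * (1 - δ)) := by
  have hα1' : 0 ≤ 1 - α := sub_nonneg.2 hα1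
  have hβ1' : 0 ≤ 1 - β := sub_nonneg.2 hβ1
  have hγ1' : 0 ≤ 1 - γ := sub_nonneg.2 hγ1
  have hδ1' : 0 ≤ 1 - δ := sub_nonneg.2 hδ1
  calc √(α * γ) * √((1 - β) * (1 - δ)) + √(β * δ) * √((1 - α) * (1 - γ)) +
        √((1 - α) * (1 - γ) * (1 - β) * (1 - δ))
      = √(α * (1 - β)) * √(γ * (1 - δ)) + √(β * (1 - α)) * √(δ * (1 - γ)) +
          √((1 - α) * (1 - β)) * √((1 - γ) * (1 - δ)) := by
        rw [sqrt_mul_mul_sqrt_mul hα0 hβ1' hγ0, sqrt_mul_mul_sqrt_mul hβ0 hα1' hδ0,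
          sqrt_mul_mul_sqrt_mul hα1' hβ1' hγ1', ← sqrt_mul (mul_nonneg hα1' hγ1') ((1 - β) * (1 - δ)),
          ← mul_assoc]
    _ ≤ √((α * (1 - β) + β * (1 - α) + (1 - α) * (1 - β)) *
          (γ * (1 - δ) + δ * (1 - γ) + (1 - γ) * (1 - δ))) :=
        sqrt_mul_sqrt_add_three_le (mul_nonneg hα0 hβ1') (mul_nonneg hβ0 hα1')
          (mul_nonneg hα1' hβ1') (mul_nonneg hγ0 hδ1') (mul_nonneg hδ0 hγ1') (mul_nonneg hγ1' hδ1')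
    _ = √((1 - α * β) * (1 - γ * δ)) := by
        rw [one_sub_mul_eq_add_add α β, one_sub_mul_eq_add_add γ δ]
end

section
/- For nonnegative reals α, β, a, b with a ≤ α² and b ≤ β², one has αβ + √(2(α²β² − ab)) ≤ (α + √(2(α² − a)))·(β + √(2(β² − b))). -/
/-!
Write `A = α² - a`, `B = β² - b`. The identity `α²β² - ab = bA + aB + AB`, subadditivity
of `√`, and `√b ≤ β`, `√a ≤ α` bound `√(α²β² - ab)` by `β√A + α√B + √A√B`; multiplying by
`√2` and using `√2 ≤ 2` on the last term gives the expansion of the right-hand side.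
-/

open Real

lemma Real.self_le_sq_sqrt (x : ℝ) : x ≤ √x ^ 2 := by
  rcases le_total 0 x with hx | hx
  · rw [sq_sqrt hx]
  · rw [sqrt_eq_zero'.mpr hx]
    simpa using hx

lemma Real.sqrt_add_le_sqrt_add_sqrt (x y : ℝ) : √(x + y) ≤ √x + √y := by
  rw [sqrt_le_left (by positivity)]
  nlinarith [self_le_sq_sqrt x, self_le_sq_sqrt y, sqrt_nonneg x, sqrt_nonneg y]

lemma Real.sqrt_mul_le_mul_sqrt {b β c : ℝ} (hβ : 0 ≤ β) (hb : b ≤ β ^ 2) (hc : 0 ≤ c) :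
    √(b * c) ≤ β * √c :=
  calc √(b * c) ≤ √(β ^ 2 * c) := sqrt_le_sqrt (mul_le_mul_of_nonneg_right hb hc)
    _ = β * √c := by rw [sqrt_mul (sq_nonneg β), sqrt_sq hβ]

lemma Real.sqrt_sq_mul_sq_sub_mul_le {α β a b : ℝ} (hα : 0 ≤ α) (hβ : 0 ≤ β)
    (ha : a ≤ α ^ 2) (hb : b ≤ β ^ 2) :
    √(α ^ 2 * β ^ 2 - a * b) ≤
      β * √(α ^ 2 - a) + α * √(β ^ 2 - b) + √(α ^ 2 - a) * √(β ^ 2 - b) := by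
  have hA : 0 ≤ α ^ 2 - a := sub_nonneg.mpr ha
  have hB : 0 ≤ β ^ 2 - b := sub_nonneg.mpr hb
  calc √(α ^ 2 * β ^ 2 - a * b)
        = √(b * (α ^ 2 - a) + a * (β ^ 2 - b) + (α ^ 2 - a) * (β ^ 2 - b)) := by ring_nf
    _ ≤ √(b * (α ^ 2 - a)) + √(a * (β ^ 2 - b)) + √((α ^ 2 - a) * (β ^ 2 - b)) :=
        (sqrt_add_le_sqrt_add_sqrt _ _).trans (by gcongr; exact sqrt_add_le_sqrt_add_sqrt _ _)
    _ ≤ _ := by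
        rw [sqrt_mul hA]
        gcongr
        · exact sqrt_mul_le_mul_sqrt hβ hb hA
        · exact sqrt_mul_le_mul_sqrt hα ha hB

theorem scalar_subMultiplicativity_ineq_general (α β a b : ℝ)
    (hα : 0 ≤ α) (hβ : 0 ≤ β)
    (ha : a ≤ α ^ 2) (hb : b ≤ β ^ 2) :
    α * β + Real.sqrt (2 * (α ^ 2 * β ^ 2 - a * b)) ≤
      (α + Real.sqrt (2 * (α ^ 2 - a))) * (β + Real.sqrt (2 * (β ^ 2 - b))) := by
  have hsqrt_two : √2 ≤ 2 := (sqrt_le_left zero_le_two).mpr (by norm_num)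
  have hmain := sqrt_sq_mul_sq_sub_mul_le hα hβ ha hb
  simp only [sqrt_mul zero_le_two]
  set u := √(α ^ 2 - a)
  set v := √(β ^ 2 - b)
  have huv : 0 ≤ u * v := by positivity
  calc α * β + √2 * √(α ^ 2 * β ^ 2 - a * b)
      ≤ α * β + √2 * (β * u + α * v + u * v) := by gcongr
    _ ≤ α * β + √2 * (β * u + α * v) + √2 ^ 2 * (u * v) := by
        rw [sq_sqrt zero_le_two]
        nlinarith
    _ = (α + √2 * u) * (β + √2 * v) := by ring

theorem scalar_subMultiplicativity_ineq (α β a b : ℝ)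
    (hα : 0 ≤ α) (hβ : 0 ≤ β) (ha0 : 0 ≤ a) (hb0 : 0 ≤ b)
    (ha : a ≤ α ^ 2) (hb : b ≤ β ^ 2) :
    α * β + Real.sqrt (2 * (α ^ 2 * β ^ 2 - a * b)) ≤
      (α + Real.sqrt (2 * (α ^ 2 - a))) * (β + Real.sqrt (2 * (β ^ 2 - b))) :=
  scalar_subMultiplicativity_ineq_general α β a b hα hβ ha hb
end
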